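/- Let G = (X ⊔ Y, E) be a finite bipartite graph with partitions X = X_S ⊔ X_L and Y = Y_S ⊔ Y_L satisfying: (a) there are no edges between X_S and Y_L; (b) G[X_S, Y_S] is Y-path-saturated; (c) G[X_L, Y_L] admits a matching saturating X_L. Then G[X_L, Y_L] admits a matching that saturates every vertex of X_L and is an envy-free matching in G. -/

import Mathlib

attribute [local instance] Classical.propDecidable

variable {V : Type*}

/-- `X, Y` form a bipartition of the vertex set of the simple graph `G`:
they are disjoint, cover all vertices, and every edge joins `X` to `Y`. -/
def IsBipartition [Fintype V] (G : SimpleGraph V) (X Y : Finset V) : Prop :=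
  Disjoint X Y ∧ X ∪ Y = Finset.univ ∧
    ∀ ⦃u v : V⦄, G.Adj u v → (u ∈ X ∧ v ∈ Y) ∨ (u ∈ Y ∧ v ∈ X)

/-- `M` is a matching of `G` all of whose edges go from `X'` to `Y'`
(i.e. a matching of the induced subgraph `G[X', Y']`), recorded as a set of
pairwise vertex-disjoint adjacent pairs. -/
def IsBipMatching (G : SimpleGraph V) (X' Y' : Finset V) (M : Finset (V × V)) : Prop :=
  (∀ p ∈ M, p.1 ∈ X' ∧ p.2 ∈ Y' ∧ G.Adj p.1 p.2) ∧
  ∀ p ∈ M, ∀ q ∈ M, p ≠ q → p.1 ≠ q.1 ∧ p.2 ≠ q.2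

/-- `M` is envy-free w.r.t. `X`: no unmatched vertex of `X` is adjacent to a
matched vertex on the `Y`-side of `M`. -/
def EnvyFree (G : SimpleGraph V) (X : Finset V) (M : Finset (V × V)) : Prop :=
  ∀ x ∈ X, x ∉ M.image Prod.fst → ∀ y ∈ M.image Prod.snd, ¬ G.Adj x y

/-- The (bipartite) graph `G[X ∪ Y]` is `Y`-path-saturated: for some `k ≥ 1` there are
partitions `X = X_0 ⊔ ⋯ ⊔ X_k` and `Y = Y_1 ⊔ ⋯ ⊔ Y_k` such that for `1 ≤ i ≤ k`
there is a perfect matching between `X_i` and `Y_i`, and every vertex of `Y_i` is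
adjacent to some vertex of `X_{i-1}`. -/
def YPathSaturated (G : SimpleGraph V) (X Y : Finset V) : Prop :=
  ∃ k : ℕ, 1 ≤ k ∧ ∃ A B : ℕ → Finset V,
    (∀ i ∈ Finset.range (k + 1), ∀ j ∈ Finset.range (k + 1), i ≠ j → Disjoint (A i) (A j)) ∧
    (∀ i ∈ Finset.Icc 1 k, ∀ j ∈ Finset.Icc 1 k, i ≠ j → Disjoint (B i) (B j)) ∧
    X = (Finset.range (k + 1)).biUnion A ∧
    Y = (Finset.Icc 1 k).biUnion B ∧
    (∀ i ∈ Finset.Icc 1 k, ∃ f : V → V,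
      Set.BijOn f (A i) (B i) ∧ ∀ x ∈ A i, G.Adj x (f x)) ∧
    (∀ i ∈ Finset.Icc 1 k, ∀ y ∈ B i, ∃ x ∈ A (i - 1), G.Adj x y)

theorem IsBipMatching.envyFree_of_subset_image_fst {G : SimpleGraph V}
    {X XS XL YL : Finset V} {M : Finset (V × V)} (hM : IsBipMatching G XL YL M)
    (hsat : XL ⊆ M.image Prod.fst) (hX : X ⊆ XS ∪ XL)
    (hXSYL : ∀ x ∈ XS, ∀ y ∈ YL, ¬ G.Adj x y) :
    EnvyFree G X M := by
  intro x hx hxM y hy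
  obtain ⟨p, hp, rfl⟩ := Finset.mem_image.mp hy
  have hxS : x ∈ XS := by
    rcases Finset.mem_union.mp (hX hx) with hxS | hxL
    · exact hxS
    · exact absurd (hsat hxL) hxM
  exact hXSYL x hxS p.2 (hM.1 p hp).2.1

theorem exists_envy_free_saturating (G : SimpleGraph V) (X : Finset V)
    (XS XL YL : Finset V)
    (hXunion : XS ∪ XL = X)
    (ha : ∀ x ∈ XS, ∀ y ∈ YL, ¬ G.Adj x y)
    (hc : ∃ M : Finset (V × V), IsBipMatching G XL YL M ∧ XL ⊆ M.image Prod.fst) :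
    ∃ M : Finset (V × V), IsBipMatching G XL YL M ∧ XL ⊆ M.image Prod.fst ∧
      EnvyFree G X M := by
  obtain ⟨M, hM, hsat⟩ := hc
  exact ⟨M, hM, hsat, hM.envyFree_of_subset_image_fst hsat hXunion.ge ha⟩
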